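/- arXiv:1405.7931 — 3 statements merged into one kernel-verified Lean document; each statement's English description precedes it below -/
import Mathlib

section
/- Let G be a group with a right-invariant metric d, and let φ̄: G → ℝ be a homogeneous quasimorphism with defect D that is Lipschitz with constant C with respect to d (i.e. |φ̄(g)| ≤ C·d(1,g) for all g) and vanishes on a subset A ⊆ G that is closed under inverses. If there exists f ∈ G with φ̄(f) ≠ 0, then for every K ≥ 0 there exists f' ∈ G with d(f', h) ≥ K for all h ∈ A; that is, A is not coarsely dense in (G, d). -/
/-!
Right invariance gives `d(g, h) = d(1, g h⁻¹)`, and for `h ∈ A` the quasimorphism inequality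
gives `|φ̄(g h⁻¹)| ≥ |φ̄(g)| - D` because `φ̄(h⁻¹) = -φ̄(h) = 0`. Hence, by the Lipschitz bound,
`C · d(g, A) ≥ |φ̄(g)| - D`, and `|φ̄(fⁿ)| = n |φ̄(f)|` is unbounded, so the points `fⁿ` move
arbitrarily far away from `A`.
-/

section Quasimorphism

variable {G : Type*} [Group G] {φ : G → ℝ}

lemma map_inv_of_homogeneous (hhom : ∀ (g : G) (k : ℤ), φ (g ^ k) = k * φ g) (g : G) :
    φ g⁻¹ = -φ g := by
  simpa using hhom g (-1)

lemma abs_map_sub_abs_map_sub_defect_le {D : ℝ} (hD : ∀ a b : G, |φ (a * b) - φ a - φ b| ≤ D)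
    (a b : G) : |φ a| - |φ b| - D ≤ |φ (a * b)| := by
  have hab := abs_le.mp (hD a b)
  rcases abs_cases (φ a) with ⟨ha, -⟩ | ⟨ha, -⟩ <;> rw [ha] <;>
    linarith [le_abs_self (φ (a * b)), neg_abs_le (φ (a * b)), le_abs_self (φ b), neg_abs_le (φ b)]

lemma exists_le_abs_map_zpow (hhom : ∀ (g : G) (k : ℤ), φ (g ^ k) = k * φ g) {f : G}
    (hf : φ f ≠ 0) (M : ℝ) : ∃ n : ℤ, M ≤ |φ (f ^ n)| := by
  obtain ⟨n, hn⟩ := exists_nat_ge (M / |φ f|)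
  refine ⟨n, ?_⟩
  rw [hhom, abs_mul, Int.cast_natCast, Nat.abs_cast]
  exact (div_le_iff₀ (abs_pos.mpr hf)).mp hn

end Quasimorphism

lemma dist_eq_dist_one_mul_inv {G : Type*} [Group G] [MetricSpace G]
    (hinv : ∀ a b f : G, dist (a * f) (b * f) = dist a b) (a b : G) :
    dist a b = dist 1 (a * b⁻¹) := by
  rw [dist_comm 1, ← hinv (a * b⁻¹) 1 b, inv_mul_cancel_right, one_mul]

lemma abs_map_sub_defect_le_mul_dist {G : Type*} [Group G] [MetricSpace G]
    (hinv : ∀ a b f : G, dist (a * f) (b * f) = dist a b) {φ : G → ℝ} {D C : ℝ}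
    (hD : ∀ a b : G, |φ (a * b) - φ a - φ b| ≤ D)
    (hhom : ∀ (g : G) (k : ℤ), φ (g ^ k) = k * φ g)
    (hLip : ∀ g : G, |φ g| ≤ C * dist 1 g) (g : G) {h : G} (hh : φ h = 0) :
    |φ g| - D ≤ C * dist g h := by
  have hh' : |φ h⁻¹| = 0 := by rw [map_inv_of_homogeneous hhom, hh, neg_zero, abs_zero]
  have := abs_map_sub_abs_map_sub_defect_le hD g h⁻¹
  rw [dist_eq_dist_one_mul_inv hinv]
  linarith [hLip (g * h⁻¹)]

theorem not_coarsely_dense_of_qm_general {G : Type*} [Group G] [MetricSpace G]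
    (hinv : ∀ a b f : G, dist (a * f) (b * f) = dist a b)
    (φ : G → ℝ) (D C : ℝ)
    (hD : ∀ a b : G, |φ (a * b) - φ a - φ b| ≤ D)
    (hhom : ∀ (g : G) (k : ℤ), φ (g ^ k) = k * φ g)
    (hLip : ∀ g : G, |φ g| ≤ C * dist 1 g)
    (A : Set G)
    (hvan : ∀ a ∈ A, φ a = 0)
    (hf : ∃ f : G, φ f ≠ 0) :
    ∀ K : ℝ, 0 ≤ K → ∃ f' : G, ∀ h ∈ A, K ≤ dist f' h := by
  intro K _
  obtain ⟨f, hf⟩ := hf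
  have hC : 0 < C := by
    by_contra! hC
    nlinarith [hLip f, abs_pos.mpr hf, dist_nonneg (x := 1) (y := f)]
  obtain ⟨n, hn⟩ := exists_le_abs_map_zpow hhom hf (C * K + D)
  refine ⟨f ^ n, fun h hA => le_of_mul_le_mul_left ?_ hC⟩
  linarith [abs_map_sub_defect_le_mul_dist hinv hD hhom hLip (f ^ n) (hvan h hA)]

/-- If a group with a right-invariant metric admits a homogeneous quasimorphism that is
Lipschitz w.r.t. the metric, vanishes on an inverse-closed subset `A`, and is nonzero
somewhere, then `A` is not coarsely dense. -/
theorem not_coarsely_dense_of_qm {G : Type*} [Group G] [MetricSpace G]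
    (hinv : ∀ a b f : G, dist (a * f) (b * f) = dist a b)
    (φ : G → ℝ) (D C : ℝ)
    (hD : ∀ a b : G, |φ (a * b) - φ a - φ b| ≤ D)
    (hhom : ∀ (g : G) (k : ℤ), φ (g ^ k) = k * φ g)
    (hLip : ∀ g : G, |φ g| ≤ C * dist 1 g)
    (A : Set G) (hAinv : ∀ a ∈ A, a⁻¹ ∈ A)
    (hvan : ∀ a ∈ A, φ a = 0)
    (hf : ∃ f : G, φ f ≠ 0) :
    ∀ K : ℝ, 0 ≤ K → ∃ f' : G, ∀ h ∈ A, K ≤ dist f' h :=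
  not_coarsely_dense_of_qm_general hinv φ D C hD hhom hLip A hvan hf
end

section
/- Let G be a group generated by a conjugation-invariant symmetric subset A ∋ 1, and define the word norm ‖f‖_A := min{m : f = h₁⋯h_m, hᵢ ∈ A}. If there exists a homogeneous quasimorphism φ̄: G → ℝ with defect D vanishing on A and an element f with φ̄(f) ≠ 0, then the metric d_A(f,g) := ‖fg⁻¹‖_A has infinite diameter on G; moreover the stable norm satisfies lim_{k→∞} ‖f^k‖_A / k ≥ |φ̄(f)| / (|φ̄(f)| + D) > 0. -/
/-!
A homogeneous quasimorphism `φ` vanishing on `A` changes by at most the defect `D` when a word is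
multiplied by a letter of `A`, so `|φ g| ≤ ‖g‖_A · D`. Applied to `f ^ k` this gives
`k |φ f| ≤ ‖f ^ k‖_A · D`, hence `D > 0` and linear growth of `‖f ^ k‖_A`. The sequence
`‖f ^ k‖_A` is subadditive, so by Fekete's lemma `‖f ^ k‖_A / k` converges, to a limit at least
`|φ f| / D ≥ |φ f| / (|φ f| + D)`.
-/

open Filter Topology

section WordNorm

variable {G : Type*} [Group G]

def wordLengths (A : Set G) (g : G) : Set ℕ :=
  {m : ℕ | ∃ l : List G, (∀ x ∈ l, x ∈ A) ∧ l.length = m ∧ l.prod = g}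

theorem add_mem_wordLengths_mul {A : Set G} {g h : G} {m n : ℕ}
    (hm : m ∈ wordLengths A g) (hn : n ∈ wordLengths A h) : m + n ∈ wordLengths A (g * h) := by
  obtain ⟨l₁, hl₁A, rfl, rfl⟩ := hm
  obtain ⟨l₂, hl₂A, rfl, rfl⟩ := hn
  refine ⟨l₁ ++ l₂, fun x hx => ?_, List.length_append, List.prod_append⟩
  rcases List.mem_append.mp hx with hx | hx
  exacts [hl₁A x hx, hl₂A x hx]

variable {A : Set G} {ν : G → ℕ}

theorem wordNorm_mul_le (hν : ∀ g, IsLeast (wordLengths A g) (ν g)) (g h : G) :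
    ν (g * h) ≤ ν g + ν h :=
  (hν (g * h)).2 (add_mem_wordLengths_mul (hν g).1 (hν h).1)

theorem subadditive_wordNorm_pow (hν : ∀ g, IsLeast (wordLengths A g) (ν g)) (f : G) :
    Subadditive fun k : ℕ => (ν (f ^ k) : ℝ) := fun m n => by
  dsimp only
  rw [pow_add]
  exact_mod_cast wordNorm_mul_le hν _ _

variable {φ : G → ℝ} {D : ℝ}

theorem abs_list_prod_le_length_mul (hD : ∀ a b, |φ (a * b) - φ a - φ b| ≤ D)
    (hvan : ∀ a ∈ A, φ a = 0) (hφ₁ : φ 1 = 0) :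
    ∀ l : List G, (∀ x ∈ l, x ∈ A) → |φ l.prod| ≤ l.length * D
  | [], _ => by simp [hφ₁]
  | a :: t, hl => by
    have ht := abs_list_prod_le_length_mul hD hvan hφ₁ t fun x hx => hl x (by simp [hx])
    have hstep : |φ (a * t.prod) - φ t.prod| ≤ D := by
      simpa [hvan a (hl a (by simp))] using hD a t.prod
    have := abs_sub_abs_le_abs_sub (φ (a * t.prod)) (φ t.prod)
    rw [List.prod_cons, List.length_cons, Nat.cast_succ]
    linarith

theorem abs_le_mul_of_mem_wordLengths (hD : ∀ a b, |φ (a * b) - φ a - φ b| ≤ D)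
    (hvan : ∀ a ∈ A, φ a = 0) (hφ₁ : φ 1 = 0) {g : G} {m : ℕ} (hm : m ∈ wordLengths A g) :
    |φ g| ≤ m * D := by
  obtain ⟨l, hlA, rfl, rfl⟩ := hm
  exact abs_list_prod_le_length_mul hD hvan hφ₁ l hlA

end WordNorm

theorem le_of_tendsto_div_of_mul_le {u : ℕ → ℝ} {c L : ℝ}
    (hu : Tendsto (fun n : ℕ => u n / n) atTop (𝓝 L)) (hc : ∀ n : ℕ, c * n ≤ u n) : c ≤ L := by
  refine ge_of_tendsto hu (eventually_atTop.mpr ⟨1, fun n hn => ?_⟩)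
  rw [le_div_iff₀ (by exact_mod_cast hn)]
  exact hc n

theorem word_metric_infinite_diameter_of_qm_general {G : Type*} [Group G]
    (A : Set G)
    (ν : G → ℕ)
    (hν : ∀ f : G, IsLeast
      {m : ℕ | ∃ l : List G, (∀ x ∈ l, x ∈ A) ∧ l.length = m ∧ l.prod = f} (ν f))
    (φ : G → ℝ) (D : ℝ)
    (hD : ∀ a b : G, |φ (a * b) - φ a - φ b| ≤ D)
    (hhom : ∀ (g : G) (k : ℤ), φ (g ^ k) = k * φ g)
    (hvan : ∀ a ∈ A, φ a = 0)
    (f : G) (hf : φ f ≠ 0) :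
    (∀ K : ℝ, ∃ g h : G, K < (ν (g * h⁻¹) : ℝ)) ∧
    ∃ L : ℝ, Filter.Tendsto (fun k : ℕ => (ν (f ^ k) : ℝ) / k) Filter.atTop (nhds L) ∧
      |φ f| / (|φ f| + D) ≤ L ∧ 0 < |φ f| / (|φ f| + D) := by
  have hφ₁ : φ 1 = 0 := by simpa using hhom 1 0
  have hbound (g : G) : |φ g| ≤ ν g * D := abs_le_mul_of_mem_wordLengths hD hvan hφ₁ (hν g).1
  have hfpos : 0 < |φ f| := abs_pos.mpr hf
  have hDpos : 0 < D := by
    by_contra! hD₀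
    exact hfpos.not_ge ((hbound f).trans (mul_nonpos_of_nonneg_of_nonpos (by positivity) hD₀))
  have hgrowth (k : ℕ) : |φ f| / D * k ≤ ν (f ^ k) := by
    have hpow : φ (f ^ k) = k * φ f := by simpa using hhom f k
    have := hbound (f ^ k)
    rw [hpow, abs_mul, Nat.abs_cast] at this
    rw [div_mul_eq_mul_div, div_le_iff₀ hDpos]
    linarith
  have hsub := subadditive_wordNorm_pow hν f
  have hlim := hsub.tendsto_lim ⟨0, by rintro _ ⟨n, rfl⟩; positivity⟩
  refine ⟨fun K => ?_, hsub.lim, hlim, ?_, by positivity⟩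
  · obtain ⟨k, hk⟩ := exists_nat_gt (K / (|φ f| / D))
    refine ⟨f ^ k, 1, ?_⟩
    rw [inv_one, mul_one]
    exact ((div_lt_iff₀' (by positivity)).mp hk).trans_le (hgrowth k)
  · calc |φ f| / (|φ f| + D) ≤ |φ f| / D := by gcongr; linarith
      _ ≤ hsub.lim := le_of_tendsto_div_of_mul_le hlim hgrowth

/-- If a homogeneous quasimorphism vanishes on a conjugation-invariant symmetric
generating set `A` and is nonzero on some `f`, then the word metric w.r.t. `A` has
infinite diameter, and the stable word norm of `f` is at least `|φ(f)|/(|φ(f)|+D) > 0`. -/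
theorem word_metric_infinite_diameter_of_qm {G : Type*} [Group G]
    (A : Set G) (hone : (1 : G) ∈ A) (hAsymm : A⁻¹ = A)
    (hAconj : ∀ g : G, ∀ a ∈ A, g * a * g⁻¹ ∈ A)
    (ν : G → ℕ)
    (hν : ∀ f : G, IsLeast
      {m : ℕ | ∃ l : List G, (∀ x ∈ l, x ∈ A) ∧ l.length = m ∧ l.prod = f} (ν f))
    (φ : G → ℝ) (D : ℝ)
    (hD : ∀ a b : G, |φ (a * b) - φ a - φ b| ≤ D)
    (hhom : ∀ (g : G) (k : ℤ), φ (g ^ k) = k * φ g)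
    (hvan : ∀ a ∈ A, φ a = 0)
    (f : G) (hf : φ f ≠ 0) :
    (∀ K : ℝ, ∃ g h : G, K < (ν (g * h⁻¹) : ℝ)) ∧
    ∃ L : ℝ, Filter.Tendsto (fun k : ℕ => (ν (f ^ k) : ℝ) / k) Filter.atTop (nhds L) ∧
      |φ f| / (|φ f| + D) ≤ L ∧ 0 < |φ f| / (|φ f| + D) :=
  word_metric_infinite_diameter_of_qm_general A ν hν φ D hD hhom hvan f hf
end

section
/- Let φ̄: G → ℝ be a nonzero homogeneous quasimorphism that is not a homomorphism, with defect D, on a group G, vanishing on a symmetric conjugation-invariant generating set A. Then the stably unbounded property holds: there exists g ∈ G whose stable autonomous norm ‖g‖_st := lim_k ‖g^k‖_A / k is strictly positive; indeed any g with φ̄(g) ≠ 0 works, since ‖f‖_A ≥ |φ̄(f)|/(sup_{a∈A}|φ̄(a)| + D) = |φ̄(f)|/D. -/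
/-!
A homogeneous quasimorphism `φ` of defect `D` changes by at most `D` when one more generator
from `A` is multiplied on, and it vanishes on `A`, so a word of length `m` in `A` has
`|φ| ≤ m D`; hence `|φ f| / D ≤ ‖f‖_A`. Applied to `g ^ k` with `φ g ≠ 0`, homogeneity gives
`‖g ^ k‖_A / k ≥ |φ g| / D > 0`, and `k ↦ ‖g ^ k‖_A` is subadditive, so by Fekete's lemma
`‖g ^ k‖_A / k` converges to a limit that is at least `|φ g| / D`.
-/

open Filter Topology

section Quasimorphism

variable {G : Type*} [Monoid G] {φ : G → ℝ} {D : ℝ}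

lemma defect_pos_of_exists_ne_add (hD : ∀ a b : G, |φ (a * b) - φ a - φ b| ≤ D)
    (hnonhom : ∃ a b : G, φ (a * b) ≠ φ a + φ b) : 0 < D := by
  obtain ⟨a, b, hab⟩ := hnonhom
  have hdefect : 0 < |φ (a * b) - φ a - φ b| := abs_pos.2 (by intro h; apply hab; linarith)
  exact hdefect.trans_le (hD a b)

lemma abs_apply_list_prod_le (hD : ∀ a b : G, |φ (a * b) - φ a - φ b| ≤ D) (hφ1 : φ 1 = 0)
    (l : List G) (hl : ∀ x ∈ l, φ x = 0) : |φ l.prod| ≤ l.length * D := by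
  induction l with
  | nil => simp [hφ1]
  | cons x t ih =>
    have hx : φ x = 0 := hl x List.mem_cons_self
    have ht := ih fun y hy => hl y (List.mem_cons_of_mem x hy)
    calc |φ (x * t.prod)|
        ≤ |φ (x * t.prod) - φ x - φ t.prod| + |φ t.prod| := by
          simpa [hx] using abs_add_le (φ (x * t.prod) - φ t.prod) (φ t.prod)
      _ ≤ D + t.length * D := add_le_add (hD x t.prod) ht
      _ = (x :: t).length * D := by simp only [List.length_cons]; push_cast; ring

end Quasimorphism

section WordNorm

variable {G : Type*} [Monoid G]

def IsWordNorm (A : Set G) (ν : G → ℕ) : Prop :=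
  ∀ f : G, IsLeast {m : ℕ | ∃ l : List G, (∀ x ∈ l, x ∈ A) ∧ l.length = m ∧ l.prod = f} (ν f)

variable {A : Set G} {ν : G → ℕ}

lemma IsWordNorm.mul_le (hν : IsWordNorm A ν) (a b : G) : ν (a * b) ≤ ν a + ν b := by
  obtain ⟨la, hla, hlena, rfl⟩ := (hν a).1
  obtain ⟨lb, hlb, hlenb, rfl⟩ := (hν b).1
  refine (hν _).2 ⟨la ++ lb, ?_, by simp [hlena, hlenb], List.prod_append⟩
  intro x hx
  rcases List.mem_append.1 hx with hx | hx
  exacts [hla x hx, hlb x hx]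

lemma IsWordNorm.subadditive_pow (hν : IsWordNorm A ν) (g : G) :
    Subadditive fun k => (ν (g ^ k) : ℝ) := by
  intro m n
  simp only [pow_add]
  exact_mod_cast hν.mul_le _ _

lemma IsWordNorm.tendsto_pow_div (hν : IsWordNorm A ν) (g : G) :
    Tendsto (fun k : ℕ => (ν (g ^ k) : ℝ) / k) atTop (𝓝 (hν.subadditive_pow g).lim) :=
  (hν.subadditive_pow g).tendsto_lim ⟨0, by rintro _ ⟨k, rfl⟩; positivity⟩

variable {φ : G → ℝ} {D : ℝ}

lemma IsWordNorm.abs_div_le (hν : IsWordNorm A ν)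
    (hD : ∀ a b : G, |φ (a * b) - φ a - φ b| ≤ D) (hD0 : 0 < D) (hφ1 : φ 1 = 0)
    (hvan : ∀ a ∈ A, φ a = 0) (f : G) : |φ f| / D ≤ ν f := by
  obtain ⟨l, hl, hlen, rfl⟩ := (hν f).1
  rw [div_le_iff₀ hD0, ← hlen]
  exact abs_apply_list_prod_le hD hφ1 l fun x hx => hvan x (hl x hx)

lemma IsWordNorm.abs_div_le_pow_div (hν : IsWordNorm A ν)
    (hD : ∀ a b : G, |φ (a * b) - φ a - φ b| ≤ D) (hD0 : 0 < D) (hφ1 : φ 1 = 0)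
    (hpow : ∀ (g : G) (k : ℕ), φ (g ^ k) = k * φ g) (hvan : ∀ a ∈ A, φ a = 0)
    (g : G) {k : ℕ} (hk : 0 < k) : |φ g| / D ≤ ν (g ^ k) / k := by
  have hk' : (0 : ℝ) < k := Nat.cast_pos.2 hk
  rw [le_div_iff₀ hk']
  calc |φ g| / D * k = |φ (g ^ k)| / D := by rw [hpow, abs_mul, Nat.abs_cast]; ring
    _ ≤ ν (g ^ k) := hν.abs_div_le hD hD0 hφ1 hvan _

end WordNorm

theorem stably_unbounded_of_qm_general {G : Type*} [Group G]
    (A : Set G)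
    (ν : G → ℕ)
    (hν : ∀ f : G, IsLeast
      {m : ℕ | ∃ l : List G, (∀ x ∈ l, x ∈ A) ∧ l.length = m ∧ l.prod = f} (ν f))
    (φ : G → ℝ) (D : ℝ)
    (hD : ∀ a b : G, |φ (a * b) - φ a - φ b| ≤ D)
    (hhom : ∀ (g : G) (k : ℤ), φ (g ^ k) = k * φ g)
    (hvan : ∀ a ∈ A, φ a = 0)
    (hnonhom : ∃ a b : G, φ (a * b) ≠ φ a + φ b)
    (hnonzero : ∃ f : G, φ f ≠ 0) :
    (∀ f : G, |φ f| / D ≤ (ν f : ℝ)) ∧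
    ∃ g : G, ∃ L : ℝ,
      Filter.Tendsto (fun k : ℕ => (ν (g ^ k) : ℝ) / k) Filter.atTop (nhds L) ∧
      0 < L := by
  have hword : IsWordNorm A ν := hν
  have hD0 : 0 < D := defect_pos_of_exists_ne_add hD hnonhom
  have hpow : ∀ (g : G) (k : ℕ), φ (g ^ k) = k * φ g := fun g k => by
    simpa using hhom g k
  have hφ1 : φ 1 = 0 := by simpa using hpow 1 0
  refine ⟨hword.abs_div_le hD hD0 hφ1 hvan, ?_⟩
  obtain ⟨g, hg⟩ := hnonzero
  have hlim := hword.tendsto_pow_div g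
  refine ⟨g, _, hlim, ?_⟩
  have hbound : |φ g| / D ≤ (hword.subadditive_pow g).lim :=
    ge_of_tendsto hlim (eventually_atTop.2
      ⟨1, fun k hk => hword.abs_div_le_pow_div hD hD0 hφ1 hpow hvan g hk⟩)
  exact (div_pos (abs_pos.2 hg) hD0).trans_le hbound

/-- Stable unboundedness: if a homogeneous quasimorphism that is not a homomorphism
vanishes on a conjugation-invariant symmetric generating set `A`, then
`‖f‖_A ≥ |φ(f)|/D` and some `g` has strictly positive stable word norm. -/
theorem stably_unbounded_of_qm {G : Type*} [Group G]
    (A : Set G) (hone : (1 : G) ∈ A) (hAsymm : A⁻¹ = A)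
    (hAconj : ∀ g : G, ∀ a ∈ A, g * a * g⁻¹ ∈ A)
    (ν : G → ℕ)
    (hν : ∀ f : G, IsLeast
      {m : ℕ | ∃ l : List G, (∀ x ∈ l, x ∈ A) ∧ l.length = m ∧ l.prod = f} (ν f))
    (φ : G → ℝ) (D : ℝ)
    (hD : ∀ a b : G, |φ (a * b) - φ a - φ b| ≤ D)
    (hhom : ∀ (g : G) (k : ℤ), φ (g ^ k) = k * φ g)
    (hvan : ∀ a ∈ A, φ a = 0)
    (hnonhom : ∃ a b : G, φ (a * b) ≠ φ a + φ b)
    (hnonzero : ∃ f : G, φ f ≠ 0) :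
    (∀ f : G, |φ f| / D ≤ (ν f : ℝ)) ∧
    ∃ g : G, ∃ L : ℝ,
      Filter.Tendsto (fun k : ℕ => (ν (g ^ k) : ℝ) / k) Filter.atTop (nhds L) ∧
      0 < L :=
  stably_unbounded_of_qm_general A ν hν φ D hD hhom hvan hnonhom hnonzero
end
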